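/- Let N ∈ ℕ, b, c_1,…,c_N ∈ ℝ, and 0 < τ_1 < ⋯ < τ_N. Define R : ℝ → ℝ by R(t) = 0 for t < 0 and, for t ≥ 0, R(t) = Σ_{n=0}^{⌊t/τ_1⌋} Σ_{|α|=n} (c^α/α!) (t − ⟨α,τ⟩)^n e^{b(t − ⟨α,τ⟩)} H(t − ⟨α,τ⟩), where the inner sum is over multi-indices α ∈ ℕ^N with |α| = Σ α_i = n, c^α = ∏ c_i^{α_i}, α! = ∏ α_i!, ⟨α,τ⟩ = Σ α_i τ_i, and H is the Heaviside function (H(s)=1 if s ≥ 0, else 0). Then R(0) = 1 and for every t > 0 (at which R is differentiable), R′(t) = b R(t) + Σ_{j=1}^N c_j R(t − τ_j). -/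

import Mathlib

open Finset

/-!
Write `φₙ(s) = sⁿ e^{bs} H(s)` (`stepExpPow b n`), so that
`R(t) = ∑_α (c^α/α!) φ_{|α|}(t - ⟨α,τ⟩)`, a sum that is finite on every half-line `t < M τ₁`
(only `|α| < M` contribute there). Every `φₙ` has the right derivative `n φₙ₋₁ + b φₙ`
everywhere (for `n = 0` the jump at `0` is invisible from the right), so `R` has right
derivative `b R(t) + ∑_α |α| (c^α/α!) φ_{|α|-1}(t - ⟨α,τ⟩)`. Splitting `|α| = ∑ⱼ αⱼ` and using
`αⱼ c^α/α! = cⱼ c^β/β!` for `α = β + eⱼ` turns the second sum into `∑ⱼ cⱼ R(t - τⱼ)`.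
Where `R` is differentiable, its derivative is this right derivative.
-/

/-- Heaviside function `H = 𝟙_{[0,∞)}`. -/
noncomputable def heaviside (s : ℝ) : ℝ := if 0 ≤ s then 1 else 0

/-- The fundamental solution `R` of the linear delay differential equation,
given by the explicit multi-index series of the paper. -/
noncomputable def Rfun (N : ℕ) (b : ℝ) (c τ : Fin N → ℝ) (τ₁ : ℝ) (t : ℝ) : ℝ :=
  if t < 0 then 0
  else
    ∑ n ∈ Finset.range (Nat.floor (t / τ₁) + 1),
      ∑ α ∈ Finset.Nat.antidiagonalTuple N n,
        ((∏ i, c i ^ α i) / (∏ i, (Nat.factorial (α i) : ℝ))) *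
          (t - ∑ i, (α i : ℝ) * τ i) ^ n *
          Real.exp (b * (t - ∑ i, (α i : ℝ) * τ i)) *
          heaviside (t - ∑ i, (α i : ℝ) * τ i)

noncomputable def stepExpPow (b : ℝ) (n : ℕ) (s : ℝ) : ℝ :=
  s ^ n * Real.exp (b * s) * heaviside s

lemma stepExpPow_of_neg {s : ℝ} (hs : s < 0) (b : ℝ) (n : ℕ) : stepExpPow b n s = 0 := by
  simp [stepExpPow, heaviside, not_le.mpr hs]

lemma stepExpPow_of_nonneg {s : ℝ} (hs : 0 ≤ s) (b : ℝ) (n : ℕ) :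
    stepExpPow b n s = s ^ n * Real.exp (b * s) := by
  simp [stepExpPow, heaviside, hs]

lemma hasDerivWithinAt_Ici_stepExpPow (b : ℝ) (n : ℕ) (s : ℝ) :
    HasDerivWithinAt (stepExpPow b n) (n * stepExpPow b (n - 1) s + b * stepExpPow b n s)
      (Set.Ici s) s := by
  rcases lt_or_ge s 0 with hs | hs
  · rw [stepExpPow_of_neg hs, stepExpPow_of_neg hs, mul_zero, mul_zero, add_zero]
    refine (hasDerivAt_const s (0 : ℝ)).hasDerivWithinAt.congr_of_eventuallyEq ?_
      (stepExpPow_of_neg hs b n)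
    filter_upwards [nhdsWithin_le_nhds (Iio_mem_nhds hs)] with x hx
      using stepExpPow_of_neg hx b n
  · have hderiv : HasDerivAt (fun x => x ^ n * Real.exp (b * x))
        (n * s ^ (n - 1) * Real.exp (b * s) + b * (s ^ n * Real.exp (b * s))) s := by
      refine (((hasDerivAt_id' s).fun_pow n).fun_mul
        ((hasDerivAt_id' s).const_mul b).exp).congr_deriv ?_
      ring
    rw [stepExpPow_of_nonneg hs, stepExpPow_of_nonneg hs, ← mul_assoc]
    exact hderiv.hasDerivWithinAt.congr (fun x hx => stepExpPow_of_nonneg (hs.trans hx) b n)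
      (stepExpPow_of_nonneg hs b n)

lemma sum_antidiagonalTuple_succ_nsmul {M : Type*} [AddCommMonoid M] {k : ℕ}
    (f : (Fin k → ℕ) → M) (j : Fin k) (n : ℕ) :
    ∑ α ∈ Nat.antidiagonalTuple k (n + 1), α j • f α =
      ∑ β ∈ Nat.antidiagonalTuple k n, (β j + 1) • f (β + Pi.single j 1) := by
  symm
  refine sum_of_injOn (· + Pi.single j 1) (add_left_injective _).injOn ?_ ?_ ?_
  · intro β hβ
    simp_all [Nat.mem_antidiagonalTuple, sum_add_distrib]
  · intro α hα hαim
    suffices α j = 0 by simp [this]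
    by_contra hne
    have hα' : α - Pi.single j 1 + Pi.single j 1 = α := by
      ext i
      rcases eq_or_ne i j with rfl | hij
      · simp [Nat.sub_add_cancel (Nat.one_le_iff_ne_zero.mpr hne)]
      · simp [hij]
    refine hαim ⟨α - Pi.single j 1, ?_, hα'⟩
    rw [mem_coe, Nat.mem_antidiagonalTuple]
    rw [Nat.mem_antidiagonalTuple, ← hα'] at hα
    simpa [sum_add_distrib] using hα
  · intro β _
    simp

noncomputable def powDivFactorial {N : ℕ} (c : Fin N → ℝ) (α : Fin N → ℕ) : ℝ :=
  (∏ i, c i ^ α i) / ∏ i, ((α i).factorial : ℝ)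

lemma powDivFactorial_eq_mul_prod_erase {N : ℕ} (c : Fin N → ℝ) (α : Fin N → ℕ) (j : Fin N) :
    powDivFactorial c α =
      c j ^ α j / (α j).factorial * ∏ i ∈ univ.erase j, c i ^ α i / (α i).factorial := by
  rw [powDivFactorial, ← prod_div_distrib, mul_prod_erase _ (fun i => c i ^ α i / (α i).factorial)
    (mem_univ j)]

lemma succ_mul_powDivFactorial_add_single {N : ℕ} (c : Fin N → ℝ) (β : Fin N → ℕ) (j : Fin N) :
    (β j + 1 : ℝ) * powDivFactorial c (β + Pi.single j 1) = c j * powDivFactorial c β := by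
  rw [powDivFactorial_eq_mul_prod_erase _ _ j, powDivFactorial_eq_mul_prod_erase _ _ j,
    prod_congr rfl fun i hi => by
      rw [Pi.add_apply, Pi.single_eq_of_ne (ne_of_mem_erase hi), add_zero]]
  simp only [Pi.add_apply, Pi.single_eq_same, Nat.factorial_succ, Nat.cast_mul, pow_succ]
  field_simp
  push_cast
  ring

noncomputable def delaySum {N : ℕ} (τ : Fin N → ℝ) (α : Fin N → ℕ) : ℝ :=
  ∑ i, (α i : ℝ) * τ i

lemma delaySum_add_single {N : ℕ} (τ : Fin N → ℝ) (β : Fin N → ℕ) (j : Fin N) :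
    delaySum τ (β + Pi.single j 1) = delaySum τ β + τ j := by
  simp [delaySum, add_mul, sum_add_distrib, Pi.single_apply]

lemma mul_le_delaySum {N n : ℕ} {τ : Fin N → ℝ} {τ₁ : ℝ} (hτ : ∀ i, τ₁ ≤ τ i)
    {α : Fin N → ℕ} (hα : α ∈ Nat.antidiagonalTuple N n) : n * τ₁ ≤ delaySum τ α := by
  rw [← Nat.mem_antidiagonalTuple.mp hα, Nat.cast_sum, sum_mul]
  exact sum_le_sum fun i _ => mul_le_mul_of_nonneg_left (hτ i) (Nat.cast_nonneg _)

lemma lt_floor_div_add_one_mul {τ₁ : ℝ} (hτ₁ : 0 < τ₁) (t : ℝ) :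
    t < (⌊t / τ₁⌋₊ + 1 : ℕ) * τ₁ := by
  rw [← div_lt_iff₀ hτ₁]
  exact_mod_cast Nat.lt_floor_add_one (t / τ₁)

section partialR

variable {N : ℕ} (b : ℝ) (c τ : Fin N → ℝ)

noncomputable def partialR (M : ℕ) (t : ℝ) : ℝ :=
  ∑ n ∈ range M, ∑ α ∈ Nat.antidiagonalTuple N n,
    powDivFactorial c α * stepExpPow b n (t - delaySum τ α)

variable {b c τ}

lemma partialR_eq_of_le {τ₁ : ℝ} (hτ₁ : 0 ≤ τ₁) (hτ : ∀ i, τ₁ ≤ τ i) {M M' : ℕ} (hMM' : M ≤ M')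
    {t : ℝ} (ht : t < M * τ₁) : partialR b c τ M' t = partialR b c τ M t := by
  refine (sum_subset (range_subset_range.mpr hMM') fun n _ hn => ?_).symm
  refine sum_eq_zero fun α hα => ?_
  have hMn : (M : ℝ) * τ₁ ≤ n * τ₁ :=
    mul_le_mul_of_nonneg_right (by exact_mod_cast not_lt.mp (mem_range.not.mp hn)) hτ₁
  rw [stepExpPow_of_neg (by linarith [mul_le_delaySum hτ hα]), mul_zero]

lemma Rfun_eq_partialR {τ₁ : ℝ} (hτ₁ : 0 < τ₁) (hτ : ∀ i, τ₁ ≤ τ i) {M : ℕ} {t : ℝ}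
    (ht : t < M * τ₁) : Rfun N b c τ τ₁ t = partialR b c τ M t := by
  rcases lt_or_ge t 0 with hneg | hnonneg
  · rw [Rfun, if_pos hneg, partialR_eq_of_le hτ₁.le hτ (Nat.zero_le M) (by simpa using hneg)]
    simp [partialR]
  · set M₀ := ⌊t / τ₁⌋₊ + 1
    have hR : Rfun N b c τ τ₁ t = partialR b c τ M₀ t := by
      rw [Rfun, if_neg (not_lt.mpr hnonneg), partialR]
      refine sum_congr rfl fun n _ => sum_congr rfl fun α _ => ?_
      rw [stepExpPow, delaySum, powDivFactorial]
      ring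
    rw [hR, ← partialR_eq_of_le hτ₁.le hτ (le_max_right M M₀) (lt_floor_div_add_one_mul hτ₁ t),
      partialR_eq_of_le hτ₁.le hτ (le_max_left M M₀) ht]

variable (b c τ)

lemma hasDerivWithinAt_Ici_partialR (M : ℕ) (t : ℝ) :
    HasDerivWithinAt (partialR b c τ M)
      (b * partialR b c τ M t + ∑ n ∈ range M, ∑ α ∈ Nat.antidiagonalTuple N n,
        powDivFactorial c α * (n * stepExpPow b (n - 1) (t - delaySum τ α))) (Set.Ici t) t := by
  have hterm (n : ℕ) (α : Fin N → ℕ) :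
      HasDerivWithinAt (fun s => stepExpPow b n (s - delaySum τ α))
        (n * stepExpPow b (n - 1) (t - delaySum τ α) + b * stepExpPow b n (t - delaySum τ α))
        (Set.Ici t) t := by
    have := (hasDerivWithinAt_Ici_stepExpPow b n (t - delaySum τ α)).scomp t
      ((hasDerivAt_id' t).sub_const (delaySum τ α)).hasDerivWithinAt
      fun s hs => sub_le_sub_right (Set.mem_Ici.mp hs) _
    rwa [one_smul] at this
  refine (HasDerivWithinAt.fun_sum fun n _ => HasDerivWithinAt.fun_sum fun α _ =>
    (hterm n α).const_mul (powDivFactorial c α)).congr_deriv ?_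
  simp only [partialR, mul_sum, ← sum_add_distrib]
  refine sum_congr rfl fun n _ => sum_congr rfl fun α _ => ?_
  ring

lemma sum_antidiagonalTuple_succ_mul_powDivFactorial (g : ℝ → ℝ) (n : ℕ) :
    ∑ α ∈ Nat.antidiagonalTuple N (n + 1), (n + 1 : ℕ) * (powDivFactorial c α * g (delaySum τ α)) =
      ∑ j, c j * ∑ β ∈ Nat.antidiagonalTuple N n,
        powDivFactorial c β * g (delaySum τ β + τ j) := by
  calc _ = ∑ α ∈ Nat.antidiagonalTuple N (n + 1), ∑ j,
        α j • (powDivFactorial c α * g (delaySum τ α)) := by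
          refine sum_congr rfl fun α hα => ?_
          rw [← Nat.mem_antidiagonalTuple.mp hα, ← sum_smul, nsmul_eq_mul]
    _ = _ := by
      rw [sum_comm]
      refine sum_congr rfl fun j _ => ?_
      rw [sum_antidiagonalTuple_succ_nsmul, mul_sum]
      refine sum_congr rfl fun β _ => ?_
      rw [nsmul_eq_mul, delaySum_add_single, ← mul_assoc, Nat.cast_add_one,
        succ_mul_powDivFactorial_add_single, mul_assoc]

lemma sum_range_succ_nat_mul_stepExpPow (M : ℕ) (t : ℝ) :
    ∑ n ∈ range (M + 1), ∑ α ∈ Nat.antidiagonalTuple N n,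
        powDivFactorial c α * (n * stepExpPow b (n - 1) (t - delaySum τ α)) =
      ∑ j, c j * partialR b c τ M (t - τ j) := by
  rw [sum_range_succ']
  simp only [Nat.cast_zero, zero_mul, mul_zero, sum_const_zero, add_zero, Nat.add_sub_cancel]
  calc _ = ∑ n ∈ range M, ∑ j, c j * ∑ β ∈ Nat.antidiagonalTuple N n,
        powDivFactorial c β * stepExpPow b n (t - τ j - delaySum τ β) := by
          refine sum_congr rfl fun n _ => ?_
          simp only [mul_left_comm (powDivFactorial c _), sub_sub, add_comm (τ _)]
          exact sum_antidiagonalTuple_succ_mul_powDivFactorial c τ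
            (fun x => stepExpPow b n (t - x)) n
    _ = _ := by
      rw [sum_comm]
      simp only [partialR, mul_sum]

end partialR

theorem stmt2 (N : ℕ) (hN : 0 < N) (b : ℝ) (c τ : Fin N → ℝ)
    (hτ1 : 0 < τ ⟨0, hN⟩) (hτmono : StrictMono τ) :
    Rfun N b c τ (τ ⟨0, hN⟩) 0 = 1 ∧
      ∀ t > (0 : ℝ), DifferentiableAt ℝ (Rfun N b c τ (τ ⟨0, hN⟩)) t →
        deriv (Rfun N b c τ (τ ⟨0, hN⟩)) t =
          b * Rfun N b c τ (τ ⟨0, hN⟩) t +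
            ∑ j, c j * Rfun N b c τ (τ ⟨0, hN⟩) (t - τ j) := by
  set τ₁ := τ ⟨0, hN⟩
  have hτ : ∀ i, τ₁ ≤ τ i := fun i => hτmono.monotone (Nat.zero_le i.val)
  refine ⟨by simp [Rfun, heaviside, Nat.antidiagonalTuple_zero_right], fun t _ hdiff => ?_⟩
  set M := ⌊t / τ₁⌋₊
  have htM : t < (M + 1 : ℕ) * τ₁ := lt_floor_div_add_one_mul hτ1 t
  have hloc : Rfun N b c τ τ₁ =ᶠ[nhds t] partialR b c τ (M + 1) :=
    Filter.eventually_of_mem (Iio_mem_nhds htM) fun s hs => Rfun_eq_partialR hτ1 hτ hs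
  have hR := hasDerivWithinAt_Ici_partialR b c τ (M + 1) t
  rw [sum_range_succ_nat_mul_stepExpPow] at hR
  have hdelayed (j : Fin N) : t - τ j < M * τ₁ := by
    push_cast at htM
    linarith [hτ j]
  rw [(uniqueDiffWithinAt_Ici t).eq_deriv _ hdiff.hasDerivAt.hasDerivWithinAt
      (hR.congr_of_eventuallyEq (nhdsWithin_le_nhds hloc) hloc.eq_of_nhds),
    Rfun_eq_partialR hτ1 hτ htM]
  simp only [Rfun_eq_partialR hτ1 hτ (hdelayed _)]
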